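/- Define Φ on infinite words over {0,1,3} by replacing every maximal block of the form (0, 3, 3, ..., 3) (of length ℓ) by (1,1,...,1,0) (ℓ−1 ones then 0), and every infinite tail (0, 3, 3, 3, ...) by (1,1,1,...). Then for every finite or infinite word η, Π(Φ(η)) = Π(η), where Π(η) = Σ_k η_k 3^{-(k-1)}, and Φ(η) contains no consecutive pair (0,3). -/

import Mathlib

/-- The alphabet `A = {0, 1, 3}`. -/
def A : Set ℕ := {0, 1, 3}

open Classical

/-- The substitution map `Φ` on infinite words over `{0,1,3}`: every maximal bad block
`(0, 3, 3, ..., 3)` (of length `ℓ ≥ 2`) is replaced by the good block `(1, ..., 1, 0)`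
(`ℓ-1` ones then `0`), and every infinite tail `(0, 3, 3, 3, ...)` becomes `(1, 1, 1, ...)`.
Position `k` gets the value `1` if it lies in a bad block which continues with a `3` at
position `k+1` (or is the starting `0` of such a block), the value `0` if it is the final
`3` of a (finite) maximal bad block, and is unchanged otherwise. -/
noncomputable def Phi (η : ℕ → ℕ) (k : ℕ) : ℕ :=
  if ∃ s, s ≤ k ∧ η s = 0 ∧ ∀ m, s < m → m ≤ k + 1 → η m = 3 then 1
  else if ∃ s, s < k ∧ η s = 0 ∧ ∀ m, s < m → m ≤ k → η m = 3 then 0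
  else η k

/-- The "in a bad block continuing with a 3" predicate. -/
def P1 (η : ℕ → ℕ) (k : ℕ) : Prop :=
  ∃ s, s ≤ k ∧ η s = 0 ∧ ∀ m, s < m → m ≤ k + 1 → η m = 3

lemma Phi_zero (η : ℕ → ℕ) :
    Phi η 0 = if P1 η 0 then 1 else η 0 := by
  unfold Phi P1
  by_cases h : ∃ s, s ≤ 0 ∧ η s = 0 ∧ ∀ m, s < m → m ≤ 0 + 1 → η m = 3
  · rw [if_pos h, if_pos h]
  · rw [if_neg h, if_neg h, if_neg]
    rintro ⟨s, hs, -⟩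
    omega

lemma Phi_succ (η : ℕ → ℕ) (k : ℕ) :
    Phi η (k + 1) = if P1 η (k + 1) then 1 else if P1 η k then 0 else η (k + 1) := by
  unfold Phi P1
  have h2 : (∃ s, s < k + 1 ∧ η s = 0 ∧ ∀ m, s < m → m ≤ k + 1 → η m = 3) ↔
      (∃ s, s ≤ k ∧ η s = 0 ∧ ∀ m, s < m → m ≤ k + 1 → η m = 3) := by
    constructor
    · rintro ⟨s, hs, h0, h3⟩; exact ⟨s, Nat.lt_succ_iff.mp hs, h0, h3⟩
    · rintro ⟨s, hs, h0, h3⟩; exact ⟨s, Nat.lt_succ_iff.mpr hs, h0, h3⟩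
  by_cases h1 : ∃ s, s ≤ k + 1 ∧ η s = 0 ∧ ∀ m, s < m → m ≤ k + 1 + 1 → η m = 3
  · rw [if_pos h1, if_pos h1]
  · rw [if_neg h1, if_neg h1]
    by_cases h : ∃ s, s ≤ k ∧ η s = 0 ∧ ∀ m, s < m → m ≤ k + 1 → η m = 3
    · rw [if_pos (h2.mpr h), if_pos h]
    · rw [if_neg (fun hh => h (h2.mp hh)), if_neg h]

lemma P1_eta_succ (η : ℕ → ℕ) (k : ℕ) (h : P1 η k) : η (k + 1) = 3 := by
  obtain ⟨s, hs, -, h3⟩ := h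
  exact h3 (k + 1) (by omega) (by omega)

lemma P1_start (η : ℕ → ℕ) (k : ℕ) (h : P1 η (k + 1)) (h' : ¬ P1 η k) : η (k + 1) = 0 := by
  obtain ⟨s, hs, h0, h3⟩ := h
  rcases Nat.lt_succ_iff_lt_or_eq.mp (Nat.lt_succ_of_le hs) with hlt | heq
  · exact absurd ⟨s, by omega, h0, fun m hm hm' => h3 m hm (by omega)⟩ h'
  · rwa [← heq]

/-- If `Φ(η)_k = 0` and `η_{k+1} = 3`, then `k` is in a bad block continuing with a 3. -/
lemma Phi_eq_zero_P1 (η : ℕ → ℕ) (k : ℕ) (h0 : Phi η k = 0) (h3 : η (k + 1) = 3) :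
    P1 η k := by
  cases k with
  | zero =>
    rw [Phi_zero] at h0
    split_ifs at h0 with h
    · exact ⟨0, le_rfl, h0, fun m hm1 hm2 => by
        have : m = 1 := by omega
        rw [this]; exact h3⟩
  | succ n =>
    rw [Phi_succ] at h0
    split_ifs at h0 with h1 h2
    · obtain ⟨s, hs, hs0, hm⟩ := h2
      refine ⟨s, by omega, hs0, fun m hm1 hm2 => ?_⟩
      rcases Nat.lt_or_ge m (n + 2) with h | h
      · exact hm m hm1 (by omega)
      · have : m = n + 2 := by omega
        rw [this]; exact h3
    · exact ⟨n + 1, le_rfl, h0, fun m hm1 hm2 => by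
        have : m = n + 2 := by omega
        rw [this]; exact h3⟩

lemma eta_le (η : ℕ → ℕ) (hη : ∀ k, η k ∈ A) (k : ℕ) : η k ≤ 3 := by
  have := hη k
  simp only [A, Set.mem_insert_iff, Set.mem_singleton_iff] at this
  omega

lemma Phi_le (η : ℕ → ℕ) (hη : ∀ k, η k ∈ A) (k : ℕ) : Phi η k ≤ 3 := by
  unfold Phi
  split_ifs
  · omega
  · omega
  · exact eta_le η hη k

lemma summable_aux (c : ℕ → ℕ) (hc : ∀ k, c k ≤ 3) :
    Summable (fun k => (c k : ℝ) / 3 ^ k) := by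
  refine Summable.of_nonneg_of_le (fun k => by positivity) (fun k => ?_)
    ((summable_geometric_of_lt_one (by norm_num) (by norm_num : (1/3 : ℝ) < 1)).mul_left 3)
  rw [one_div, inv_pow, div_eq_mul_inv]
  have h1 : (c k : ℝ) ≤ 3 := by exact_mod_cast hc k
  have h3 : (0 : ℝ) ≤ ((3 : ℝ) ^ k)⁻¹ := by positivity
  nlinarith

lemma key (η : ℕ → ℕ) (hη : ∀ k, η k ∈ A) (N : ℕ) :
    ∑ k ∈ Finset.range (N + 1), ((Phi η k : ℝ) - η k) / 3 ^ k
      = if P1 η N then (1 : ℝ) / 3 ^ N else 0 := by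
  induction N with
  | zero =>
    simp only [zero_add, Finset.range_one, Finset.sum_singleton, Phi_zero]
    by_cases h : P1 η 0
    · have h0 : η 0 = 0 := by
        obtain ⟨s, hs, h0, -⟩ := h
        rw [Nat.le_zero.mp hs] at h0
        exact h0
      rw [if_pos h, if_pos h, h0]
      norm_num
    · rw [if_neg h, if_neg h]
      simp
  | succ N ih =>
    rw [Finset.sum_range_succ, ih, Phi_succ]
    by_cases hN : P1 η N <;> by_cases hN1 : P1 η (N + 1)
    · rw [if_pos hN, if_pos hN1, if_pos hN1, P1_eta_succ η N hN]
      rw [pow_succ]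
      push_cast
      field_simp
      norm_num
    · rw [if_pos hN, if_neg hN1, if_neg hN1, if_pos hN, P1_eta_succ η N hN]
      rw [pow_succ]
      push_cast
      field_simp
      norm_num
    · rw [if_neg hN, if_pos hN1, if_pos hN1, P1_start η N hN1 hN]
      rw [pow_succ]
      push_cast
      ring
    · rw [if_neg hN, if_neg hN1, if_neg hN1, if_neg hN]
      simp

/-- For every infinite word `η` over `A`, `Π(Φ(η)) = Π(η)` where
`Π(η) = Σ_k η_k 3^{-(k-1)}`, and `Φ(η)` contains no consecutive pair `(0,3)`. -/
theorem stmt_7 (η : ℕ → ℕ) (hη : ∀ k, η k ∈ A) :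
    (∑' k : ℕ, (Phi η k : ℝ) / 3 ^ k) = (∑' k : ℕ, (η k : ℝ) / 3 ^ k) ∧
      ∀ k, ¬ (Phi η k = 0 ∧ Phi η (k + 1) = 3) := by
  constructor
  · have hf : Summable (fun k => (Phi η k : ℝ) / 3 ^ k) :=
      summable_aux _ (Phi_le η hη)
    have hg : Summable (fun k => (η k : ℝ) / 3 ^ k) :=
      summable_aux _ (eta_le η hη)
    have hd : Summable (fun k => ((Phi η k : ℝ) - η k) / 3 ^ k) := by
      have := hf.sub hg
      simpa [sub_div] using this
    have hsum : (∑' k : ℕ, ((Phi η k : ℝ) - η k) / 3 ^ k) = 0 := by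
      have h1 : Filter.Tendsto (fun n => ∑ k ∈ Finset.range n,
          ((Phi η k : ℝ) - η k) / 3 ^ k) Filter.atTop
          (nhds (∑' k : ℕ, ((Phi η k : ℝ) - η k) / 3 ^ k)) :=
        hd.hasSum.tendsto_sum_nat
      have h2 : Filter.Tendsto (fun n => ∑ k ∈ Finset.range n,
          ((Phi η k : ℝ) - η k) / 3 ^ k) Filter.atTop (nhds 0) := by
        rw [← Filter.tendsto_add_atTop_iff_nat 1]
        refine squeeze_zero_norm (fun N => ?_)
          (tendsto_pow_atTop_nhds_zero_of_lt_one (by norm_num) (by norm_num : (1/3 : ℝ) < 1))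
        rw [key η hη N]
        have hpw : (1 / 3 : ℝ) ^ N = 1 / 3 ^ N := by
          rw [div_pow, one_pow]
        split_ifs
        · rw [hpw, Real.norm_eq_abs, abs_of_nonneg (by positivity)]
        · rw [norm_zero]
          positivity
      exact tendsto_nhds_unique h1 h2
    have heq := Summable.tsum_sub hf hg
    have heq2 : (∑' k : ℕ, ((Phi η k : ℝ) / 3 ^ k - (η k : ℝ) / 3 ^ k)) = 0 := by
      rw [← hsum]
      congr 1
      ext k
      rw [sub_div]
    rw [heq2] at heq
    linarith
  · rintro k ⟨h0, h3⟩
    rw [Phi_succ] at h3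
    split_ifs at h3 with a b
    all_goals first
      | omega
      | exact b (Phi_eq_zero_P1 η k h0 h3)
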